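/- arXiv:2506.14267 — 3 statements merged into one kernel-verified Lean document; each statement's English description precedes it below -/
import Mathlib

section
/- Let (x₁, z₁) and (x₂, z₂) be two strong solutions of the closed-loop inclusions ẋ ∈ A(x,z), ż ∈ r - g(x,z) - N_K(z). Then almost everywhere (1/2)(d/dt){‖x₁ - x₂‖² + ‖z₁ - z₂‖²} ≤ -⟨u₁ - u₂, g(x₁,z₁) - g(x₂,z₂)⟩ + ⟨z₁ - z₂, g(x₁,z₁) - g(x₂,z₂)⟩ with z_i = u_i, i.e., (1/2)(d/dt){‖x₁ - x₂‖² + ‖z₁ - z₂‖²} + h(x₁,z₁; x₂,z₂) ≤ 0, where h is the internal dissipation function. -/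
open MeasureTheory Set

/-- Normal cone to `K` at `z`. -/
def normalCone {Y : Type*} [NormedAddCommGroup Y] [InnerProductSpace ℝ Y]
    (K : Set Y) (z : Y) : Set Y :=
  {w : Y | z ∈ K ∧ ∀ y ∈ K, 0 ≤ (inner ℝ w (z - y) : ℝ)}

/-! The internal dissipation `h` cancels the `x`-part of the incremental energy, so the claim
reduces to `(1/2)(d/dt)‖z₁ - z₂‖² ≤ -⟪z₁ - z₂, g₁ - g₂⟫`. Since `ż₁ - ż₂ = -(g₁ - g₂) - (w₁ - w₂)`
with `wᵢ ∈ N_K(zᵢ)`, this is the monotonicity of the normal cone map. -/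

section

variable {Y : Type*} [NormedAddCommGroup Y] [InnerProductSpace ℝ Y]

theorem normalCone_inner_sub_nonneg {K : Set Y} {z₁ z₂ w₁ w₂ : Y}
    (hw₁ : w₁ ∈ normalCone K z₁) (hw₂ : w₂ ∈ normalCone K z₂) :
    0 ≤ (inner ℝ (w₁ - w₂) (z₁ - z₂) : ℝ) := by
  have h₁ := hw₁.2 z₂ hw₂.1
  have h₂ := hw₂.2 z₁ hw₁.1
  rw [← neg_sub, inner_neg_right] at h₂
  rw [inner_sub_left]
  linarith

theorem half_deriv_norm_sub_sq_le_of_mem_normalCone {K : Set Y} {z₁ z₂ : ℝ → Y}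
    {t : ℝ} {v₁ v₂ w₁ w₂ : Y} {dz : ℝ}
    (hz₁ : HasDerivAt z₁ (v₁ - w₁) t) (hz₂ : HasDerivAt z₂ (v₂ - w₂) t)
    (hw₁ : w₁ ∈ normalCone K (z₁ t)) (hw₂ : w₂ ∈ normalCone K (z₂ t))
    (hdz : HasDerivAt (fun s => ‖z₁ s - z₂ s‖ ^ 2) dz t) :
    (1 / 2) * dz ≤ (inner ℝ (z₁ t - z₂ t) (v₁ - v₂) : ℝ) := by
  have hmono := normalCone_inner_sub_nonneg hw₁ hw₂
  rw [hdz.unique (hz₁.sub hz₂).norm_sq, Pi.sub_apply, sub_sub_sub_comm, inner_sub_right,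
    real_inner_comm (w₁ - w₂)]
  linarith

end

theorem stmt5_general
    {X Y : Type*} [NormedAddCommGroup X] [InnerProductSpace ℝ X]
    [NormedAddCommGroup Y] [InnerProductSpace ℝ Y]
    (g : X × Y → Y) (K : Set Y)
    (r : Y)
    (x₁ x₂ : ℝ → X) (z₁ z₂ : ℝ → Y)
    (z₁' z₂' : ℝ → Y)
    -- strong solutions of the closed-loop differential inclusions:
    (hz₁ : ∀ᵐ t ∂(volume.restrict (Ioi (0:ℝ))),
      HasDerivAt z₁ (z₁' t) t ∧
        ∃ w ∈ normalCone K (z₁ t), z₁' t = r - g (x₁ t, z₁ t) - w)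
    (hz₂ : ∀ᵐ t ∂(volume.restrict (Ioi (0:ℝ))),
      HasDerivAt z₂ (z₂' t) t ∧
        ∃ w ∈ normalCone K (z₂ t), z₂' t = r - g (x₂ t, z₂ t) - w) :
    ∀ᵐ t ∂(volume.restrict (Ioi (0:ℝ))),
      ∀ dx dz : ℝ,
        HasDerivAt (fun s => ‖x₁ s - x₂ s‖ ^ 2) dx t →
        HasDerivAt (fun s => ‖z₁ s - z₂ s‖ ^ 2) dz t →
        (1 / 2) * (dx + dz) +
          ((inner ℝ (z₁ t - z₂ t) (g (x₁ t, z₁ t) - g (x₂ t, z₂ t)) : ℝ)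
            - (1 / 2) * dx) ≤ 0 := by
  filter_upwards [hz₁, hz₂] with t ⟨hd₁, w₁, hw₁, he₁⟩ ⟨hd₂, w₂, hw₂, he₂⟩
  intro dx dz _ hdz
  rw [he₁] at hd₁
  rw [he₂] at hd₂
  have key := half_deriv_norm_sub_sq_le_of_mem_normalCone hd₁ hd₂ hw₁ hw₂ hdz
  rw [sub_sub_sub_cancel_left, ← neg_sub (g (x₁ t, z₁ t)), inner_neg_right] at key
  linarith

/-- Closed-loop incremental energy inequality. For two strong
solutions `(x₁,z₁)`, `(x₂,z₂)` of the closed loop `ẋ ∈ A(x,z)`,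
`ż ∈ r - g(x,z) - N_K(z)` of an incrementally impedance passive system, one has a.e.
`(1/2)(d/dt){‖x₁-x₂‖² + ‖z₁-z₂‖²} + h(x₁,z₁;x₂,z₂) ≤ 0`, where the internal
dissipation is `h = ⟨z₁-z₂, g(x₁,z₁)-g(x₂,z₂)⟩ - (1/2)(d/dt)‖x₁-x₂‖²`. -/
theorem stmt5
    {X Y : Type*} [NormedAddCommGroup X] [InnerProductSpace ℝ X]
    [NormedAddCommGroup Y] [InnerProductSpace ℝ Y]
    (A : X × Y → Set X) (g : X × Y → Y) (K : Set Y)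
    (hne : K.Nonempty) (hcl : IsClosed K) (hconv : Convex ℝ K) (r : Y)
    (x₁ x₂ : ℝ → X) (z₁ z₂ : ℝ → Y)
    (x₁' x₂' : ℝ → X) (z₁' z₂' : ℝ → Y)
    -- strong solutions of the closed-loop differential inclusions:
    (hK₁ : ∀ t ≥ (0:ℝ), z₁ t ∈ K) (hK₂ : ∀ t ≥ (0:ℝ), z₂ t ∈ K)
    (hx₁ : ∀ᵐ t ∂(volume.restrict (Ioi (0:ℝ))),
      HasDerivAt x₁ (x₁' t) t ∧ x₁' t ∈ A (x₁ t, z₁ t))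
    (hx₂ : ∀ᵐ t ∂(volume.restrict (Ioi (0:ℝ))),
      HasDerivAt x₂ (x₂' t) t ∧ x₂' t ∈ A (x₂ t, z₂ t))
    (hz₁ : ∀ᵐ t ∂(volume.restrict (Ioi (0:ℝ))),
      HasDerivAt z₁ (z₁' t) t ∧
        ∃ w ∈ normalCone K (z₁ t), z₁' t = r - g (x₁ t, z₁ t) - w)
    (hz₂ : ∀ᵐ t ∂(volume.restrict (Ioi (0:ℝ))),
      HasDerivAt z₂ (z₂' t) t ∧
        ∃ w ∈ normalCone K (z₂ t), z₂' t = r - g (x₂ t, z₂ t) - w)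
    -- incremental impedance passivity of the open-loop system along these solutions:
    (hpassive : ∀ᵐ t ∂(volume.restrict (Ioi (0:ℝ))),
      ∀ dx : ℝ, HasDerivAt (fun s => ‖x₁ s - x₂ s‖ ^ 2) dx t →
        (1 / 2) * dx ≤
          (inner ℝ (z₁ t - z₂ t) (g (x₁ t, z₁ t) - g (x₂ t, z₂ t)) : ℝ)) :
    ∀ᵐ t ∂(volume.restrict (Ioi (0:ℝ))),
      ∀ dx dz : ℝ,
        HasDerivAt (fun s => ‖x₁ s - x₂ s‖ ^ 2) dx t →
        HasDerivAt (fun s => ‖z₁ s - z₂ s‖ ^ 2) dz t →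
        (1 / 2) * (dx + dz) +
          ((inner ℝ (z₁ t - z₂ t) (g (x₁ t, z₁ t) - g (x₂ t, z₂ t)) : ℝ)
            - (1 / 2) * dx) ≤ 0 :=
  stmt5_general g K r x₁ x₂ z₁ z₂ z₁' z₂' hz₁ hz₂
end

section
/- Under the distinguishability assumption (h(x⋆,u⋆; x†,u†) = 0 for steady-state pairs implies x⋆ = x†) and injectivity of the steady-state map (for each x ∈ C at most one u ∈ K with 0 ∈ A(x,u)), the closed-loop system ẋ ∈ A(x,z), ż ∈ r - g(x,z) - N_K(z) possesses at most one equilibrium. -/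
theorem inner_sub_sub_nonneg_of_mem_normalCone {Y : Type*} [NormedAddCommGroup Y]
    [InnerProductSpace ℝ Y] {K : Set Y} {u₁ u₂ w₁ w₂ : Y}
    (hw₁ : w₁ ∈ normalCone K u₁) (hw₂ : w₂ ∈ normalCone K u₂) :
    0 ≤ (inner ℝ (w₁ - w₂) (u₁ - u₂) : ℝ) := by
  have h₁ := hw₁.2 u₂ hw₂.1
  have h₂ := hw₂.2 u₁ hw₁.1
  rw [← neg_sub u₁ u₂, inner_neg_right] at h₂
  rw [inner_sub_left]
  linarith

theorem stmt6_general
    {X Y : Type*} [NormedAddCommGroup X] [InnerProductSpace ℝ X]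
    [NormedAddCommGroup Y] [InnerProductSpace ℝ Y]
    (A : X × Y → Set X) (g : X × Y → Y) (C : Set X) (K : Set Y)
    (r : Y)
    -- incremental impedance passivity (dissipativity of the coupling 𝒜):
    (hdiss : ∀ p₁ p₂ : X × Y, ∀ f₁ ∈ A p₁, ∀ f₂ ∈ A p₂,
      (inner ℝ (f₁ - f₂) (p₁.1 - p₂.1) : ℝ)
        - (inner ℝ (g p₁ - g p₂) (p₁.2 - p₂.2) : ℝ) ≤ 0)
    -- distinguishability of steady states:
    (hdist : ∀ xs xd : X, ∀ us ud : Y, (0:X) ∈ A (xs, us) → (0:X) ∈ A (xd, ud) →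
      (inner ℝ (us - ud) (g (xs, us) - g (xd, ud)) : ℝ) = 0 → xs = xd)
    -- injectivity of the steady-state map: at most one input per steady state:
    (hinj : ∀ x ∈ C, ∀ u₁ ∈ K, ∀ u₂ ∈ K,
      (0:X) ∈ A (x, u₁) → (0:X) ∈ A (x, u₂) → u₁ = u₂) :
    -- at most one closed-loop equilibrium:
    ∀ x₁ ∈ C, ∀ x₂ ∈ C, ∀ u₁ ∈ K, ∀ u₂ ∈ K,
      (0:X) ∈ A (x₁, u₁) → (0:X) ∈ A (x₂, u₂) →
      r - g (x₁, u₁) ∈ normalCone K u₁ → r - g (x₂, u₂) ∈ normalCone K u₂ →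
      x₁ = x₂ ∧ u₁ = u₂ := by
  intro x₁ hx₁ x₂ _ u₁ hu₁ u₂ hu₂ hA₁ hA₂ hN₁ hN₂
  have hpassive : 0 ≤ (inner ℝ (g (x₁, u₁) - g (x₂, u₂)) (u₁ - u₂) : ℝ) := by
    simpa using hdiss (x₁, u₁) (x₂, u₂) 0 hA₁ 0 hA₂
  have hcone : (inner ℝ (g (x₁, u₁) - g (x₂, u₂)) (u₁ - u₂) : ℝ) ≤ 0 := by
    have h := inner_sub_sub_nonneg_of_mem_normalCone hN₁ hN₂
    rwa [sub_sub_sub_cancel_left, ← neg_sub, inner_neg_left, neg_nonneg] at h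
  have hx : x₁ = x₂ := hdist x₁ x₂ u₁ u₂ hA₁ hA₂ (by rw [real_inner_comm]; linarith)
  subst hx
  exact ⟨rfl, hinj x₁ hx₁ u₁ hu₁ u₂ hu₂ hA₁ hA₂⟩

/-- Under incremental impedance passivity (dissipativity of the
coupling), the distinguishability assumption (vanishing internal dissipation
`h(x⋆,u⋆;x†,u†) = ⟨u⋆-u†, g⋆-g†⟩ = 0` for steady-state pairs forces `x⋆ = x†`)
and injectivity of the steady-state map, the closed-loop system
`ẋ ∈ A(x,z)`, `ż ∈ r - g(x,z) - N_K(z)` possesses at most one equilibrium. -/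
theorem stmt6
    {X Y : Type*} [NormedAddCommGroup X] [InnerProductSpace ℝ X]
    [NormedAddCommGroup Y] [InnerProductSpace ℝ Y]
    (A : X × Y → Set X) (g : X × Y → Y) (C : Set X) (K : Set Y)
    (hCcl : IsClosed C) (hCconv : Convex ℝ C)
    (hKcl : IsClosed K) (hKconv : Convex ℝ K) (r : Y)
    -- incremental impedance passivity (dissipativity of the coupling 𝒜):
    (hdiss : ∀ p₁ p₂ : X × Y, ∀ f₁ ∈ A p₁, ∀ f₂ ∈ A p₂,
      (inner ℝ (f₁ - f₂) (p₁.1 - p₂.1) : ℝ)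
        - (inner ℝ (g p₁ - g p₂) (p₁.2 - p₂.2) : ℝ) ≤ 0)
    -- distinguishability of steady states:
    (hdist : ∀ xs xd : X, ∀ us ud : Y, (0:X) ∈ A (xs, us) → (0:X) ∈ A (xd, ud) →
      (inner ℝ (us - ud) (g (xs, us) - g (xd, ud)) : ℝ) = 0 → xs = xd)
    -- injectivity of the steady-state map: at most one input per steady state:
    (hinj : ∀ x ∈ C, ∀ u₁ ∈ K, ∀ u₂ ∈ K,
      (0:X) ∈ A (x, u₁) → (0:X) ∈ A (x, u₂) → u₁ = u₂) :
    -- at most one closed-loop equilibrium: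
    ∀ x₁ ∈ C, ∀ x₂ ∈ C, ∀ u₁ ∈ K, ∀ u₂ ∈ K,
      (0:X) ∈ A (x₁, u₁) → (0:X) ∈ A (x₂, u₂) →
      r - g (x₁, u₁) ∈ normalCone K u₁ → r - g (x₂, u₂) ∈ normalCone K u₂ →
      x₁ = x₂ ∧ u₁ = u₂ :=
  stmt6_general A g C K r hdiss hdist hinj
end

section
/- Let T : E → E' be a monotone, bounded, hemicontinuous map from a separable reflexive Banach space E to its dual, and suppose it is coercive in the sense that ⟨T(w), w⟩/‖w‖ → ∞ as ‖w‖ → ∞. Then T is surjective: for every L ∈ E' there exists w ∈ E with T(w) = L. If additionally T is strictly monotone (⟨T(w₁)-T(w₂), w₁-w₂⟩ > 0 whenever w₁ ≠ w₂), then T is bijective. -/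
/-!
Galerkin approximation and Minty's trick. On a finite-dimensional subspace `V`, the problem
`⟨T w, v⟩ = ⟨L, v⟩` for all `v ∈ V` is solved without Brouwer's fixed point theorem: in coordinates
it asks for a zero of a continuous monotone map `G`; the regularization `G + ε • id` is strongly
monotone, hence surjective by induction on the dimension (the first coordinate is solved by the
intermediate value theorem and depends continuously on the others), and coercivity keeps the
regularized zeros bounded as `ε → 0`. Continuity of `G` comes from demicontinuity of monotone,
hemicontinuous, bounded operators.

The Galerkin solutions `w F`, indexed by the finite subsets `F` of `E`, are bounded by coercivity.
By Banach–Alaoglu in `E''` and reflexivity they converge weakly to some `u` along an ultrafilter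
refining `atTop`, while `T (w F) → L` weak-*. Since `⟨T (w F), w F⟩ = ⟨L, w F⟩`, monotonicity
passes to the limit as `⟨L - T v, u - v⟩ ≥ 0` for every `v`, and testing with `v = u + t • z`,
`t → 0⁺`, gives `T u = L` by hemicontinuity.
-/

open Filter Topology Bornology NormedSpace

theorem StrongDual.exists_tendsto_apply_of_eventually_norm_le {𝕜 X α : Type*}
    [NontriviallyNormedField 𝕜] [ProperSpace 𝕜] [SeminormedAddCommGroup X] [NormedSpace 𝕜 X]
    (𝒰 : Ultrafilter α) (f : α → StrongDual 𝕜 X) {C : ℝ} (hC : ∀ᶠ a in 𝒰, ‖f a‖ ≤ C) :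
    ∃ ξ : StrongDual 𝕜 X, ∀ x, Tendsto (fun a => f a x) 𝒰 (𝓝 (ξ x)) := by
  have hmem : (StrongDual.toWeakDual ∘ f) ⁻¹'
      (WeakDual.toStrongDual ⁻¹' Metric.closedBall 0 C) ∈ 𝒰 :=
    hC.mono fun a ha => mem_closedBall_zero_iff.2 ha
  obtain ⟨ξ, -, hξ⟩ := (WeakDual.isCompact_closedBall (0 : StrongDual 𝕜 X) C).ultrafilter_le_nhds'
    (𝒰.map (StrongDual.toWeakDual ∘ f)) hmem
  exact ⟨WeakDual.toStrongDual ξ, fun x => (WeakDual.eval_continuous x).tendsto ξ |>.comp hξ⟩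

theorem StrongDual.tendsto_apply_apply {𝕜 X α : Type*} [NontriviallyNormedField 𝕜]
    [SeminormedAddCommGroup X] [NormedSpace 𝕜 X] {l : Filter α} {f : α → StrongDual 𝕜 X}
    {ξ : StrongDual 𝕜 X} {x : α → X} {x₀ : X} {C : ℝ}
    (hf : ∀ y, Tendsto (fun a => f a y) l (𝓝 (ξ y))) (hC : ∀ᶠ a in l, ‖f a‖ ≤ C)
    (hx : Tendsto x l (𝓝 x₀)) : Tendsto (fun a => f a (x a)) l (𝓝 (ξ x₀)) := by
  have hsmall : Tendsto (fun a => f a (x a - x₀)) l (𝓝 0) :=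
    squeeze_zero_norm' (hC.mono fun a ha => (f a).le_of_opNorm_le ha _)
      (by simpa using (tendsto_iff_norm_sub_tendsto_zero.1 hx).const_mul C)
  simpa using (hf x₀).add hsmall

section FiniteDimensional

open Matrix

theorem Real.surjective_of_strongly_monotone {g : ℝ → ℝ} {ε : ℝ} (hε : 0 < ε)
    (hg : Continuous g) (hsm : ∀ s t, ε * (s - t) ^ 2 ≤ (g s - g t) * (s - t)) :
    Function.Surjective g := by
  have hlin : ∀ s, 0 < s → g 0 + ε * s ≤ g s ∧ g (-s) ≤ g 0 + ε * -s := fun s hs =>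
    ⟨by nlinarith [hsm s 0], by nlinarith [hsm (-s) 0]⟩
  have hεid : Tendsto (fun s => g 0 + ε * s) atTop atTop :=
    tendsto_atTop_add_const_left _ _ (tendsto_id.const_mul_atTop hε)
  have hεid' : Tendsto (fun s => g 0 + ε * s) atBot atBot :=
    tendsto_atBot_add_const_left _ _ (tendsto_id.const_mul_atBot hε)
  refine hg.surjective (tendsto_atTop_mono' atTop ?_ hεid) (tendsto_atBot_mono' atBot ?_ hεid')
  · filter_upwards [eventually_gt_atTop 0] with s hs using (hlin s hs).1
  · filter_upwards [eventually_lt_atBot 0] with s hs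
    simpa using (hlin (-s) (neg_pos.2 hs)).2

theorem continuous_of_strongly_monotone_of_apply_eq {X : Type*} [TopologicalSpace X]
    {g : X → ℝ → ℝ} {τ : X → ℝ} {ε c : ℝ} (hε : 0 < ε) (hg : ∀ t, Continuous fun x => g x t)
    (hsm : ∀ x s t, ε * (s - t) ^ 2 ≤ (g x s - g x t) * (s - t)) (hτ : ∀ x, g x (τ x) = c) :
    Continuous τ := by
  refine continuous_iff_continuousAt.2 fun x₀ => ?_
  have hbound : ∀ x, |τ x - τ x₀| ≤ ε⁻¹ * |g x (τ x₀) - g x₀ (τ x₀)| := by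
    intro x
    set d := τ x - τ x₀
    have h : ε * |d| * |d| ≤ |g x (τ x₀) - g x₀ (τ x₀)| * |d| := by
      have := hsm x (τ x) (τ x₀)
      rw [hτ x, ← hτ x₀] at this
      rw [mul_assoc, ← sq, sq_abs]
      refine this.trans ((le_abs_self _).trans_eq ?_)
      rw [abs_mul, abs_sub_comm]
    rw [le_inv_mul_iff₀ hε]
    rcases (abs_nonneg d).eq_or_lt with hd | hd
    · rw [← hd, mul_zero]
      exact abs_nonneg _
    · exact le_of_mul_le_mul_right h hd
  have hlim : Tendsto (fun x => ε⁻¹ * |g x (τ x₀) - g x₀ (τ x₀)|) (𝓝 x₀) (𝓝 0) := by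
    simpa using (((hg (τ x₀)).tendsto x₀).sub_const (g x₀ (τ x₀))).abs.const_mul ε⁻¹
  exact tendsto_iff_norm_sub_tendsto_zero.2 (squeeze_zero (fun _ => norm_nonneg _) hbound hlim)

theorem surjective_of_strongly_monotone : ∀ {n : ℕ} {F : (Fin n → ℝ) → Fin n → ℝ} {ε : ℝ},
    0 < ε → Continuous F → (∀ x y, ε * ((x - y) ⬝ᵥ (x - y)) ≤ (F x - F y) ⬝ᵥ (x - y)) →
    Function.Surjective F
  | 0, _, _, _, _, _ => fun y => ⟨0, Subsingleton.elim _ _⟩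
  | n + 1, F, ε, hε, hF, hsm => by
    intro y
    -- Solve for the first coordinate as a function of the remaining ones, then recurse.
    set g : (Fin n → ℝ) → ℝ → ℝ := fun x t => F (vecCons t x) 0
    have hg : ∀ t, Continuous fun x => g x t := fun t =>
      (continuous_apply 0).comp (hF.comp (continuous_const.matrixVecCons continuous_id))
    have hgsm : ∀ x s t, ε * (s - t) ^ 2 ≤ (g x s - g x t) * (s - t) := fun x s t => by
      simpa [g, sq, cons_sub_cons, vecHead, sub_mul] using hsm (vecCons s x) (vecCons t x)
    have hgc : ∀ x, Continuous (g x) := fun x =>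
      (continuous_apply 0).comp (hF.comp (continuous_id.matrixVecCons continuous_const))
    choose τ hτ using fun x => Real.surjective_of_strongly_monotone hε (hgc x) (hgsm x) (y 0)
    have hτc : Continuous τ := continuous_of_strongly_monotone_of_apply_eq hε hg hgsm hτ
    set H : (Fin n → ℝ) → Fin n → ℝ := fun x => vecTail (F (vecCons (τ x) x))
    have hHc : Continuous H :=
      (continuous_pi fun i => continuous_apply _).comp (hF.comp (hτc.matrixVecCons continuous_id))
    have hHsm : ∀ x x', ε * ((x - x') ⬝ᵥ (x - x')) ≤ (H x - H x') ⬝ᵥ (x - x') := by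
      intro x x'
      have h := hsm (vecCons (τ x) x) (vecCons (τ x') x')
      have h0 : vecHead (F (vecCons (τ x) x)) = vecHead (F (vecCons (τ x') x')) :=
        (hτ x).trans (hτ x').symm
      rw [cons_sub_cons, cons_dotProduct_cons, dotProduct_cons, head_sub, tail_sub, h0, sub_self,
        zero_mul, zero_add] at h
      nlinarith [mul_self_nonneg (τ x - τ x')]
    obtain ⟨x, hx⟩ := surjective_of_strongly_monotone hε hHc hHsm (vecTail y)
    exact ⟨vecCons (τ x) x, funext fun i => Fin.cases (hτ x) (fun j => congrFun hx j) i⟩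

theorem exists_eq_zero_of_monotone {n : ℕ} {G : (Fin n → ℝ) → Fin n → ℝ} (hG : Continuous G)
    (hmono : ∀ x y, 0 ≤ (G x - G y) ⬝ᵥ (x - y)) (hcoerc : IsBounded {c | G c ⬝ᵥ c ≤ 0}) :
    ∃ c, G c = 0 := by
  set ε : ℕ → ℝ := fun k => 1 / ((k : ℝ) + 1)
  have hεpos : ∀ k, 0 < ε k := fun k => Nat.one_div_pos_of_nat
  have hsol : ∀ k, ∃ c, G c + ε k • c = 0 := by
    intro k
    refine surjective_of_strongly_monotone (F := fun c => G c + ε k • c) (hεpos k)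
      (hG.add (continuous_const_smul _)) (fun x y => ?_) 0
    have h : G x + ε k • x - (G y + ε k • y) = (G x - G y) + ε k • (x - y) := by module
    rw [h, add_dotProduct, smul_dotProduct, smul_eq_mul]
    linarith [hmono x y]
  choose c hc using hsol
  have hGc : ∀ k, G (c k) = -(ε k • c k) := fun k => eq_neg_of_add_eq_zero_left (hc k)
  have hmem : ∀ k, c k ∈ {c | G c ⬝ᵥ c ≤ 0} := by
    intro k
    have hsq : 0 ≤ c k ⬝ᵥ c k := Finset.sum_nonneg fun i _ => mul_self_nonneg (c k i)
    have hεk := hεpos k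
    simp only [Set.mem_ofPred_eq, hGc, neg_dotProduct, smul_dotProduct, smul_eq_mul]
    nlinarith
  obtain ⟨C, hC⟩ := isBounded_iff_forall_norm_le.1 hcoerc
  obtain ⟨c₀, -, φ, hφ, hcφ⟩ := (isCompact_closedBall (0 : Fin n → ℝ) C).tendsto_subseq
    fun k => mem_closedBall_zero_iff.2 (hC _ (hmem k))
  have hε : Tendsto (ε ∘ φ) atTop (𝓝 0) :=
    tendsto_one_div_add_atTop_nhds_zero_nat.comp hφ.tendsto_atTop
  refine ⟨c₀, tendsto_nhds_unique ((hG.tendsto c₀).comp hcφ) ?_⟩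
  simpa [Function.comp_def, hGc] using (hε.smul hcφ).neg

end FiniteDimensional

section MonotoneOperator

variable {E : Type*} [NormedAddCommGroup E] [NormedSpace ℝ E]

def IsMonotoneOperator (T : E → StrongDual ℝ E) : Prop :=
  ∀ w₁ w₂, 0 ≤ (T w₁ - T w₂) (w₁ - w₂)

def IsHemicontinuous (T : E → StrongDual ℝ E) : Prop :=
  ∀ w₁ w₂, Continuous fun t : ℝ => T (w₁ + t • w₂) w₂

variable {T : E → StrongDual ℝ E}

theorem IsHemicontinuous.eq_of_forall_nonneg (hT : IsHemicontinuous T) {u : E}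
    {L : StrongDual ℝ E} (h : ∀ v, 0 ≤ (L - T v) (u - v)) : T u = L := by
  have key : ∀ z, L z ≤ T u z := by
    intro z
    have hlim : Tendsto (fun t : ℝ => T (u + t • z) z) (𝓝[>] 0) (𝓝 (T u z)) := by
      simpa using ((hT u z).tendsto 0).mono_left nhdsWithin_le_nhds
    refine ge_of_tendsto hlim (eventually_nhdsWithin_of_forall fun t (ht : 0 < t) => ?_)
    have := h (u + t • z)
    rw [sub_add_cancel_left, map_neg, map_smul, sub_apply, smul_eq_mul] at this
    nlinarith
  ext z
  linarith [key z, key (-z), map_neg (T u) z, map_neg L z]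

theorem isBounded_setOf_apply_self_le
    (hcoercive : ∀ M : ℝ, ∃ ρ : ℝ, ∀ w : E, ρ ≤ ‖w‖ → M ≤ T w w / ‖w‖) (L : StrongDual ℝ E) :
    IsBounded {w | T w w ≤ L w} := by
  obtain ⟨ρ, hρ⟩ := hcoercive (‖L‖ + 1)
  refine isBounded_iff_forall_norm_le.2 ⟨max ρ 0, fun w (hw : T w w ≤ L w) => ?_⟩
  by_contra! hlarge
  have hpos : 0 < ‖w‖ := (le_max_right ρ 0).trans_lt hlarge
  have h := (le_div_iff₀ hpos).1 (hρ w ((le_max_left ρ 0).trans hlarge.le))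
  nlinarith [(le_abs_self _).trans (L.le_opNorm w)]

variable (hmono : IsMonotoneOperator T) (hhemi : IsHemicontinuous T)
  (hbdd : ∀ s : Set E, IsBounded s → IsBounded (T '' s))
include hmono hhemi hbdd

theorem IsMonotoneOperator.tendsto_apply {α : Type*} {l : Filter α} {w : α → E} {w₀ : E}
    (hw : Tendsto w l (𝓝 w₀)) (x : E) : Tendsto (fun a => T (w a) x) l (𝓝 (T w₀ x)) := by
  rw [tendsto_iff_ultrafilter]
  intro 𝒰 h𝒰
  replace hw := hw.mono_left h𝒰
  obtain ⟨B, hB⟩ :=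
    isBounded_iff_forall_norm_le.1 (hbdd _ (Metric.isBounded_ball (x := w₀) (r := 1)))
  have hTw : ∀ᶠ a in 𝒰, ‖T (w a)‖ ≤ B :=
    (hw.eventually (Metric.ball_mem_nhds w₀ one_pos)).mono fun a ha => hB _ ⟨w a, ha, rfl⟩
  obtain ⟨ξ, hξ⟩ := StrongDual.exists_tendsto_apply_of_eventually_norm_le 𝒰 (T ∘ w) hTw
  suffices T w₀ = ξ from this ▸ hξ x
  refine hhemi.eq_of_forall_nonneg fun v => ?_
  have hlim : Tendsto (fun a => (T (w a) - T v) (w a - v)) 𝒰 (𝓝 ((ξ - T v) (w₀ - v))) :=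
    (StrongDual.tendsto_apply_apply hξ hTw (hw.sub_const v)).sub
      ((T v).continuous.tendsto _ |>.comp (hw.sub_const v))
  exact ge_of_tendsto' hlim fun a => hmono (w a) v

theorem IsMonotoneOperator.continuous_apply_comp {Y : Type*} [TopologicalSpace Y] {f : Y → E}
    (hf : Continuous f) (x : E) : Continuous fun y => T (f y) x :=
  continuous_iff_continuousAt.2 fun y => hmono.tendsto_apply hhemi hbdd (hf.tendsto y) x

theorem IsMonotoneOperator.exists_galerkin_solution (V : Submodule ℝ E) [FiniteDimensional ℝ V]
    (L : StrongDual ℝ E) (hcoerc : IsBounded {w | T w w ≤ L w}) :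
    ∃ w ∈ V, ∀ v ∈ V, T w v = L v := by
  set b := Module.finBasis ℝ V
  set φ := b.equivFunL
  set U : (Fin (Module.finrank ℝ V) → ℝ) → E := fun c => φ.symm c
  have hpair : ∀ (f : StrongDual ℝ E) c, f (U c) = (fun i => f (b i)) ⬝ᵥ c := by
    intro f c
    change f ((b.equivFun.symm c : V) : E) = _
    simp [b.equivFun_symm_apply, dotProduct, mul_comm]
  set G : (Fin (Module.finrank ℝ V) → ℝ) → Fin (Module.finrank ℝ V) → ℝ :=
    fun c i => (T (U c) - L) (b i)
  have hG : Continuous G := continuous_pi fun i =>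
    (hmono.continuous_apply_comp hhemi hbdd (continuous_subtype_val.comp φ.symm.continuous)
      (b i)).sub continuous_const
  have hGpair : ∀ c d, G c ⬝ᵥ d = (T (U c) - L) (U d) := fun c d => (hpair _ d).symm
  have hGmono : ∀ x y, 0 ≤ (G x - G y) ⬝ᵥ (x - y) := by
    intro x y
    have hU : U (x - y) = U x - U y := by simp [U]
    rw [sub_dotProduct, hGpair, hGpair, hU, ← sub_apply, sub_sub_sub_cancel_right]
    exact hmono _ _
  have hGcoerc : IsBounded {c | G c ⬝ᵥ c ≤ 0} := by
    obtain ⟨R, hR⟩ := isBounded_iff_forall_norm_le.1 hcoerc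
    refine isBounded_iff_forall_norm_le.2 ⟨‖φ.toContinuousLinearMap‖ * R, fun c hc => ?_⟩
    have hUc : ‖U c‖ ≤ R := hR _ (sub_nonpos.1 ((hGpair c c).symm.trans_le hc))
    calc ‖c‖ = ‖φ (φ.symm c)‖ := by rw [φ.apply_symm_apply]
      _ ≤ ‖φ.toContinuousLinearMap‖ * ‖U c‖ := φ.toContinuousLinearMap.le_opNorm _
      _ ≤ ‖φ.toContinuousLinearMap‖ * R := by gcongr
  obtain ⟨c₀, hc₀⟩ := exists_eq_zero_of_monotone hG hGmono hGcoerc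
  refine ⟨U c₀, (φ.symm c₀).2, fun v hv => sub_eq_zero.1 ?_⟩
  have hv' : v = U (φ ⟨v, hv⟩) := by simp [U]
  rw [hv', ← sub_apply, ← hGpair, hc₀, zero_dotProduct]

theorem IsMonotoneOperator.surjective (hrefl : Function.Surjective (inclusionInDoubleDual ℝ E))
    (hcoerc : ∀ L : StrongDual ℝ E, IsBounded {w | T w w ≤ L w}) : Function.Surjective T := by
  intro L
  choose w hwV hwL using fun F : Finset E =>
    hmono.exists_galerkin_solution hhemi hbdd (Submodule.span ℝ F) L (hcoerc L)
  have hwself : ∀ F, T (w F) (w F) = L (w F) := fun F => hwL F _ (hwV F)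
  obtain ⟨R, hR⟩ := isBounded_iff_forall_norm_le.1 (hcoerc L)
  let 𝒰 : Ultrafilter (Finset E) := .of atTop
  obtain ⟨Φ, hΦ⟩ := StrongDual.exists_tendsto_apply_of_eventually_norm_le 𝒰
    (fun F => inclusionInDoubleDual ℝ E (w F)) (C := R)
    (.of_forall fun F => (double_dual_bound ℝ E _).trans (hR _ (hwself F).le))
  obtain ⟨u, rfl⟩ := hrefl Φ
  have hweak : ∀ f : StrongDual ℝ E, Tendsto (fun F => f (w F)) 𝒰 (𝓝 (f u)) := by
    simpa only [dual_def] using hΦ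
  have hTw : ∀ x, Tendsto (fun F => T (w F) x) 𝒰 (𝓝 (L x)) := fun x =>
    tendsto_const_nhds.congr' <| Ultrafilter.of_le atTop <| (eventually_ge_atTop {x}).mono
      fun F hF => (hwL F x (Submodule.subset_span (hF (Finset.mem_singleton_self x)))).symm
  refine ⟨u, hhemi.eq_of_forall_nonneg fun v => ?_⟩
  have hlim : Tendsto (fun F => (L - T v) (w F) - T (w F) v + T v v) 𝒰
      (𝓝 ((L - T v) u - L v + T v v)) := ((hweak _).sub (hTw v)).add_const _
  have hexp : (L - T v) (u - v) = (L - T v) u - L v + T v v := by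
    simp only [map_sub, sub_apply]; ring
  refine hexp ▸ ge_of_tendsto' hlim fun F => ?_
  have := hmono (w F) v
  simp only [map_sub, sub_apply, hwself] at this ⊢
  linarith

end MonotoneOperator

theorem stmt17_general
    {E : Type*} [NormedAddCommGroup E] [NormedSpace ℝ E]
    (hrefl : Function.Surjective (inclusionInDoubleDual ℝ E))
    (T : E → StrongDual ℝ E)
    (hmono : ∀ w₁ w₂ : E, 0 ≤ (T w₁ - T w₂) (w₁ - w₂))
    (hbdd : ∀ s : Set E, Bornology.IsBounded s → Bornology.IsBounded (T '' s))
    (hhemi : ∀ w₁ w₂ : E, Continuous fun t : ℝ => (T (w₁ + t • w₂)) w₂)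
    (hcoercive : ∀ M : ℝ, ∃ ρ : ℝ, ∀ w : E, ρ ≤ ‖w‖ → M ≤ (T w) w / ‖w‖) :
    Function.Surjective T ∧
      ((∀ w₁ w₂ : E, w₁ ≠ w₂ → 0 < (T w₁ - T w₂) (w₁ - w₂)) →
        Function.Bijective T) := by
  have hsurj : Function.Surjective T := IsMonotoneOperator.surjective hmono hhemi hbdd hrefl
    (isBounded_setOf_apply_self_le hcoercive)
  refine ⟨hsurj, fun hstrict => ⟨fun w₁ w₂ h => ?_, hsurj⟩⟩
  by_contra hne
  simpa [h] using hstrict w₁ w₂ hne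

/-- Browder–Minty: A monotone, bounded, hemicontinuous, coercive
map `T` from a separable reflexive real Banach space `E` to its dual `E'` is
surjective; if moreover `T` is strictly monotone then `T` is bijective.
Reflexivity is encoded as surjectivity of the canonical inclusion of `E` into
its double dual. -/
theorem stmt17
    {E : Type*} [NormedAddCommGroup E] [NormedSpace ℝ E] [CompleteSpace E]
    [TopologicalSpace.SeparableSpace E]
    (hrefl : Function.Surjective (inclusionInDoubleDual ℝ E))
    (T : E → StrongDual ℝ E)
    (hmono : ∀ w₁ w₂ : E, 0 ≤ (T w₁ - T w₂) (w₁ - w₂))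
    (hbdd : ∀ s : Set E, Bornology.IsBounded s → Bornology.IsBounded (T '' s))
    (hhemi : ∀ w₁ w₂ : E, Continuous fun t : ℝ => (T (w₁ + t • w₂)) w₂)
    (hcoercive : ∀ M : ℝ, ∃ ρ : ℝ, ∀ w : E, ρ ≤ ‖w‖ → M ≤ (T w) w / ‖w‖) :
    Function.Surjective T ∧
      ((∀ w₁ w₂ : E, w₁ ≠ w₂ → 0 < (T w₁ - T w₂) (w₁ - w₂)) →
        Function.Bijective T) :=
  stmt17_general hrefl T hmono hbdd hhemi hcoercive
end
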